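/- If a finitely generated group G admits a combing, then G is finitely presented; that is, there is a finite subset R of the free group F_A such that G ≅ F_A / ⟨⟨R⟩⟩, the quotient by the normal closure of R. -/

import Mathlib

/-!
Take as relators all `x y⁻¹` with `x, y` positive words of total length at most `2k + 2` that
are trivial in `G`. In the quotient `F_S / ⟨⟨R⟩⟩` any two such short words with the same value
agree. If `w g` and `w (g s)` `k`-fellow-travel, joining the two paths at each time by a word of
length at most `k` cuts the loop `w g · s · (w (g s))⁻¹` into short relators, so
`[w g] · [s] = [w (g s)]` in the quotient. Hence `g ↦ [w g]` intertwines the action of the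
generators, and an element of the free group that is trivial in `G` is trivial in the quotient.
-/

/-- Evaluation of a word over the alphabet `S` in the group `G`, via `e : S → G`. -/
def wordEval {G : Type*} [Group G] {S : Type*} (e : S → G) (w : List S) : G :=
  (w.map e).prod

/-- The word metric on `G` with respect to the (symmetric) generating map `e : S → G`. -/
noncomputable def wordDist {G : Type*} [Group G] {S : Type*} (e : S → G) (g h : G) : ℕ :=
  sInf {n : ℕ | ∃ w : List S, w.length = n ∧ wordEval e w = g⁻¹ * h}

/-- The point reached after `j` steps along the path traced by the word `u`. -/
def pathAt {G : Type*} [Group G] {S : Type*} (e : S → G) (u : List S) (j : ℕ) : G :=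
  wordEval e (u.take j)

/-- Two words `k`-fellow-travel if the corresponding paths stay at word-metric
distance at most `k` at each time. -/
def FellowTravel {G : Type*} [Group G] {S : Type*} (e : S → G) (k : ℕ) (u v : List S) : Prop :=
  ∀ j : ℕ, wordDist e (pathAt e u j) (pathAt e v j) ≤ k

section Words

variable {G : Type*} [Group G] {S : Type*} (e : S → G)

def wordToFreeGroup (u : List S) : FreeGroup S := (u.map FreeGroup.of).prod

@[simp]
lemma wordToFreeGroup_append (u v : List S) :
    wordToFreeGroup (u ++ v) = wordToFreeGroup u * wordToFreeGroup v := by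
  simp [wordToFreeGroup]

@[simp]
lemma wordToFreeGroup_singleton (a : S) : wordToFreeGroup [a] = FreeGroup.of a := by
  simp [wordToFreeGroup]

@[simp]
lemma wordEval_append (u v : List S) :
    wordEval e (u ++ v) = wordEval e u * wordEval e v := by
  simp [wordEval]

@[simp]
lemma wordEval_singleton (a : S) : wordEval e [a] = e a := by
  simp [wordEval]

lemma lift_wordToFreeGroup (u : List S) :
    FreeGroup.lift e (wordToFreeGroup u) = wordEval e u := by
  simp [wordToFreeGroup, wordEval, map_list_prod, Function.comp_def]

lemma pathAt_succ (u : List S) (t : ℕ) :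
    pathAt e u (t + 1) = pathAt e u t * wordEval e u[t]?.toList := by
  rw [pathAt, pathAt, List.take_add_one, wordEval_append]

lemma pathAt_of_length_le {u : List S} {t : ℕ} (h : u.length ≤ t) :
    pathAt e u t = wordEval e u := by
  rw [pathAt, List.take_of_length_le h]

lemma exists_word_of_wordDist_le (hsurj : Function.Surjective (wordEval e)) {g h : G} {k : ℕ}
    (hk : wordDist e g h ≤ k) : ∃ c : List S, c.length ≤ k ∧ wordEval e c = g⁻¹ * h := by
  obtain ⟨u, hu⟩ := hsurj (g⁻¹ * h)
  obtain ⟨c, hc, hce⟩ := Nat.sInf_mem (⟨u.length, u, rfl, hu⟩ :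
    {n : ℕ | ∃ w : List S, w.length = n ∧ wordEval e w = g⁻¹ * h}.Nonempty)
  exact ⟨c, hc ▸ hk, hce⟩

end Words

section ShortRelators

variable {G : Type*} [Group G] {S : Type*} (e : S → G)

def shortRelators (n : ℕ) : Set (FreeGroup S) :=
  {r | FreeGroup.lift e r = 1 ∧ ∃ x y : List S,
    x.length + y.length ≤ n ∧ wordToFreeGroup x * (wordToFreeGroup y)⁻¹ = r}

lemma shortRelators_finite [Finite S] (n : ℕ) : (shortRelators e n).Finite := by
  have hwords := List.finite_length_le S n
  refine ((hwords.prod hwords).image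
    fun p => wordToFreeGroup p.1 * (wordToFreeGroup p.2)⁻¹).subset ?_
  rintro r ⟨-, x, y, hxy, rfl⟩
  exact ⟨(x, y), ⟨show x.length ≤ n by omega, show y.length ≤ n by omega⟩, rfl⟩

lemma shortRelators_subset_ker (n : ℕ) : shortRelators e n ⊆ (FreeGroup.lift e).ker :=
  fun _ hr => hr.1

def IdentifiesShortWords {Q : Type*} [Group Q] (n : ℕ) (q : FreeGroup S →* Q) : Prop :=
  ∀ x y : List S, x.length + y.length ≤ n → wordEval e x = wordEval e y →
    q (wordToFreeGroup x) = q (wordToFreeGroup y)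

lemma identifiesShortWords_mk' (n : ℕ) :
    IdentifiesShortWords e n (QuotientGroup.mk' (Subgroup.normalClosure (shortRelators e n))) := by
  intro x y hxy hval
  have hrel : wordToFreeGroup x * (wordToFreeGroup y)⁻¹ ∈ shortRelators e n := by
    refine ⟨?_, x, y, hxy, rfl⟩
    simp [lift_wordToFreeGroup, hval]
  rw [← mul_inv_eq_one, ← map_inv, ← map_mul, QuotientGroup.mk'_apply, QuotientGroup.eq_one_iff]
  exact Subgroup.subset_normalClosure hrel

end ShortRelators

namespace IdentifiesShortWords

variable {G : Type*} [Group G] {S : Type*} {e : S → G} {Q : Type*} [Group Q]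
  {q : FreeGroup S →* Q} {k : ℕ}

lemma exists_rung (hq : IdentifiesShortWords e (2 * k + 2) q)
    (hsurj : Function.Surjective (wordEval e)) {u v : List S} (huv : FellowTravel e k u v)
    (t : ℕ) : ∃ c : List S, c.length ≤ k ∧ wordEval e c = (pathAt e u t)⁻¹ * pathAt e v t ∧
      q (wordToFreeGroup (u.take t)) * q (wordToFreeGroup c) = q (wordToFreeGroup (v.take t)) := by
  induction t with
  | zero => exact ⟨[], by simp [pathAt, wordEval, wordToFreeGroup]⟩
  | succ t ih =>
    obtain ⟨c, hc, hcval, hcq⟩ := ih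
    obtain ⟨c', hc', hc'val⟩ := exists_word_of_wordDist_le e hsurj (huv (t + 1))
    refine ⟨c', hc', hc'val, ?_⟩
    have ha : u[t]?.toList.length ≤ 1 := by cases u[t]? <;> simp
    have hb : v[t]?.toList.length ≤ 1 := by cases v[t]? <;> simp
    -- one square `u[t] · c' = c · v[t]` of the ladder, of length at most `2k + 2`
    have hsquare : q (wordToFreeGroup u[t]?.toList) * q (wordToFreeGroup c') =
        q (wordToFreeGroup c) * q (wordToFreeGroup v[t]?.toList) := by
      simp only [← map_mul, ← wordToFreeGroup_append]
      refine hq _ _ (by simp only [List.length_append]; omega) ?_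
      rw [wordEval_append, wordEval_append, hc'val, hcval, pathAt_succ, pathAt_succ]
      group
    rw [List.take_add_one, List.take_add_one, wordToFreeGroup_append, wordToFreeGroup_append,
      map_mul, map_mul, mul_assoc, hsquare, ← mul_assoc, hcq]

lemma mul_of_eq_of_fellowTravel (hq : IdentifiesShortWords e (2 * k + 2) q)
    (hsurj : Function.Surjective (wordEval e)) {u v : List S} (huv : FellowTravel e k u v)
    {s : S} (hs : wordEval e u * e s = wordEval e v) :
    q (wordToFreeGroup u) * q (FreeGroup.of s) = q (wordToFreeGroup v) := by
  set T := max u.length v.length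
  obtain ⟨c, hc, hcval, hcq⟩ := hq.exists_rung hsurj huv T
  rw [List.take_of_length_le (le_max_left _ _), List.take_of_length_le (le_max_right _ _)] at hcq
  rw [pathAt_of_length_le e (le_max_left _ _), pathAt_of_length_le e (le_max_right _ _),
    ← hs] at hcval
  have hlast : q (wordToFreeGroup [s]) = q (wordToFreeGroup c) :=
    hq _ _ (by simp only [List.length_singleton]; omega) (by simp [hcval])
  rw [wordToFreeGroup_singleton] at hlast
  rw [hlast, hcq]

end IdentifiesShortWords

lemma ker_lift_le_ker_of_intertwining {G : Type*} [Group G] {S : Type*} (e : S → G)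
    {Q : Type*} [Group Q] (q : FreeGroup S →* Q) (P : G → Q)
    (hP : ∀ g s, P g * q (FreeGroup.of s) = P (g * e s)) :
    (FreeGroup.lift e).ker ≤ q.ker := by
  have hact : ∀ x g, P g * q x = P (g * FreeGroup.lift e x) := by
    intro x
    induction x using FreeGroup.induction_on with
    | C1 => simp
    | of s => simpa using (hP · s)
    | inv_of s _ =>
      intro g
      simpa [mul_inv_eq_iff_eq_mul] using (hP (g * (e s)⁻¹) s).symm
    | mul x y hx hy => intro g; rw [map_mul, ← mul_assoc, hx, hy, map_mul, mul_assoc]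
  intro x hx
  have h1 := hact x 1
  rw [MonoidHom.mem_ker.mp hx, mul_one] at h1
  exact mul_eq_left.mp h1

theorem combable_implies_finitely_presented_general
    {G : Type*} [Group G] {S : Type*} [Fintype S] (e : S → G)
    (w : G → List S) (hw : ∀ g : G, wordEval e (w g) = g)
    (k : ℕ) (hcomb : ∀ (g : G) (s : S), FellowTravel e k (w g) (w (g * e s))) :
    ∃ R : Set (FreeGroup S), R.Finite ∧
      (FreeGroup.lift e).ker = Subgroup.normalClosure R := by
  set R := shortRelators e (2 * k + 2)
  refine ⟨R, shortRelators_finite e _, le_antisymm ?_ ?_⟩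
  · have hsurj : Function.Surjective (wordEval e) := fun g => ⟨w g, hw g⟩
    have hq := identifiesShortWords_mk' e (2 * k + 2)
    have hstrip : ∀ g s, QuotientGroup.mk' (Subgroup.normalClosure R) (wordToFreeGroup (w g)) *
        QuotientGroup.mk' _ (FreeGroup.of s) = QuotientGroup.mk' _ (wordToFreeGroup (w (g * e s))) :=
      fun g s => hq.mul_of_eq_of_fellowTravel hsurj (hcomb g s) (by rw [hw, hw])
    simpa only [QuotientGroup.ker_mk'] using ker_lift_le_ker_of_intertwining e _ _ hstrip
  · exact Subgroup.normalClosure_le_normal (shortRelators_subset_ker e _)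

/-- If a finitely generated group `G` (with finite symmetric generating alphabet `S`,
letters evaluating via `e : S → G`) admits a combing — a choice of word `w g`
representing each `g ∈ G` such that `w g` and `w (g·s)` `k`-fellow-travel for every
generator `s` — then `G` is finitely presented: there is a finite set `R ⊆ F_S` of
relators such that the kernel of the evaluation map `F_S → G` is the normal closure
of `R`, i.e. `G ≅ F_S / ⟨⟨R⟩⟩`. -/
theorem combable_implies_finitely_presented
    {G : Type*} [Group G] {S : Type*} [Fintype S] (e : S → G)
    (hsym : ∀ a : S, ∃ b : S, e b = (e a)⁻¹)
    (hgen : Subgroup.closure (Set.range e) = ⊤)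
    (w : G → List S) (hw : ∀ g : G, wordEval e (w g) = g)
    (k : ℕ) (hcomb : ∀ (g : G) (s : S), FellowTravel e k (w g) (w (g * e s))) :
    ∃ R : Set (FreeGroup S), R.Finite ∧
      (FreeGroup.lift e).ker = Subgroup.normalClosure R :=
  combable_implies_finitely_presented_general e w hw k hcomb
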